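/- For r ≥ 3, the fault-tolerant metric dimension of the r-dimensional Benes network B(r) equals 3·2^r. -/

import Mathlib

open SimpleGraph

variable {V : Type*}

/-- `S` is a resolving set of `G`. -/
def ResSet (G : SimpleGraph V) (S : Set V) : Prop :=
  ∀ x y : V, x ≠ y → ∃ w ∈ S, G.dist x w ≠ G.dist y w

/-- `S` is a fault-tolerant resolving set of `G`. -/
def FTResSet (G : SimpleGraph V) (S : Set V) : Prop :=
  ResSet G S ∧ ∀ x ∈ S, ResSet G (S \ {x})

/-- Metric dimension. -/
noncomputable def md (G : SimpleGraph V) : ℕ :=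
  sInf {n | ∃ S : Set V, S.ncard = n ∧ ResSet G S}

/-- Fault-tolerant metric dimension. -/
noncomputable def ftmd (G : SimpleGraph V) : ℕ :=
  sInf {n | ∃ S : Set V, S.ncard = n ∧ FTResSet G S}

/-- `u` and `v` are twins: distinct and with equal open or equal closed neighborhoods. -/
def IsTwinPair (G : SimpleGraph V) (u v : V) : Prop :=
  u ≠ v ∧ (G.neighborSet u = G.neighborSet v ∨
    G.neighborSet u ∪ {u} = G.neighborSet v ∪ {v})

/-- `u` is a twin vertex. -/
def IsTwin (G : SimpleGraph V) (u : V) : Prop := ∃ v, IsTwinPair G u v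

/-- Adjacency in the Benes network `B(r)`: `(s,j) ~ (s',j+1)` iff `s = s'` or they differ
exactly in bit `j+1` (when `j ≤ r-1`) resp. bit `2r-j` (when `j ≥ r`); bit `b` is index `b-1`. -/
def BenesAdj (r : ℕ) (u v : (Fin r → Bool) × Fin (2 * r + 1)) : Prop :=
  ∃ j : ℕ, ((u.2.val = j ∧ v.2.val = j + 1) ∨ (v.2.val = j ∧ u.2.val = j + 1)) ∧
    (u.1 = v.1 ∨ ∃ k : Fin r, k.val + 1 = (if j < r then j + 1 else 2 * r - j) ∧
      u.1 k ≠ v.1 k ∧ ∀ i : Fin r, i ≠ k → u.1 i = v.1 i)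

/-- The `r`-dimensional Benes network `B(r)`. -/
def Benes (r : ℕ) : SimpleGraph ((Fin r → Bool) × Fin (2 * r + 1)) where
  Adj u v := BenesAdj r u v
  symm := by
    constructor
    rintro u v ⟨j, h1, h2⟩
    refine ⟨j, h1.symm, ?_⟩
    rcases h2 with h | ⟨k, hk, hne, hall⟩
    · exact Or.inl h.symm
    · exact Or.inr ⟨k, hk, hne.symm, fun i hi => (hall i hi).symm⟩
  loopless := by
    constructor
    rintro u ⟨j, h1 | h1, -⟩ <;> omega

/-!
Every vertex on level `0`, `r` or `2r` has a twin with the same open neighbourhood: all edges at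
such a level switch one and the same bit, so flipping that bit changes no adjacency. A twin pair
is resolved only by its own members, hence a fault-tolerant resolving set contains all `3 * 2 ^ r`
of these vertices. Conversely they resolve every pair twice. Vertices `(s, a)`, `(t, c)` with
`a < c` are separated by `(s, 0)` and `(t, 2r)`, because distances dominate level differences
and are equal to them within a column. On a common level `a`, a walk from `(t, a)` to `(s, ℓ)`
must use an edge switching a bit in which `s` and `t` differ; for a suitable `ℓ ∈ {0, r, 2r}`
every such edge lies outside the level range between `a` and `ℓ`, so `(s, ℓ)` and `(t, ℓ)` both
separate the pair.
-/

section Twins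

variable {G : SimpleGraph V} {p q w : V} {S : Set V}

lemma IsTwinPair.symm (h : IsTwinPair G p q) : IsTwinPair G q p :=
  ⟨h.1.symm, h.2.imp Eq.symm Eq.symm⟩

lemma IsTwinPair.neighborSet_subset (h : IsTwinPair G p q) :
    G.neighborSet p ⊆ insert q (G.neighborSet q) := by
  rcases h.2 with h | h
  · exact h ▸ Set.subset_insert q _
  · intro x hx
    have : x ∈ G.neighborSet q ∪ {q} := h ▸ Or.inl hx
    rwa [Set.union_singleton] at this

lemma exists_walk_length_le_dist_of_neighborSet_subset
    (hN : G.neighborSet p ⊆ insert q (G.neighborSet q)) (hwp : w ≠ p) (h : G.Reachable p w) :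
    ∃ c : G.Walk q w, c.length ≤ G.dist p w := by
  obtain ⟨c, hc⟩ := h.exists_walk_length_eq_dist
  cases c with
  | nil => exact absurd rfl hwp
  | cons hadj c =>
    rw [← hc, Walk.length_cons]
    rcases hN hadj with rfl | hq
    · exact ⟨c, by omega⟩
    · exact ⟨.cons hq c, le_rfl⟩

lemma IsTwinPair.dist_eq (h : IsTwinPair G p q) (hwp : w ≠ p) (hwq : w ≠ q) :
    G.dist p w = G.dist q w := by
  by_cases hp : G.Reachable p w
  · obtain ⟨c, hc⟩ := exists_walk_length_le_dist_of_neighborSet_subset h.neighborSet_subset hwp hp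
    obtain ⟨c', hc'⟩ :=
      exists_walk_length_le_dist_of_neighborSet_subset h.symm.neighborSet_subset hwq c.reachable
    exact le_antisymm ((dist_le c').trans hc') ((dist_le c).trans hc)
  · have hq : ¬ G.Reachable q w := fun hq =>
      hp (exists_walk_length_le_dist_of_neighborSet_subset
        h.symm.neighborSet_subset hwq hq).choose.reachable
    rw [dist_eq_zero_of_not_reachable hp, dist_eq_zero_of_not_reachable hq]

lemma FTResSet.mem_of_isTwinPair (hS : FTResSet G S) (h : IsTwinPair G p q) : p ∈ S := by
  by_contra hpS
  have resolver_eq_q : ∀ w ∈ S, G.dist p w ≠ G.dist q w → w = q := fun w hw hd => by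
    by_contra hwq
    exact hd (h.dist_eq (fun hwp => hpS (hwp ▸ hw)) hwq)
  obtain ⟨w, hwS, hw⟩ := hS.1 p q h.1
  obtain rfl := resolver_eq_q w hwS hw
  obtain ⟨w', ⟨hw'S, hw'q⟩, hw'⟩ := hS.2 w hwS p w h.1
  exact hw'q (resolver_eq_q w' hw'S hw')

lemma FTResSet.mem_of_isTwin (hS : FTResSet G S) (h : IsTwin G p) : p ∈ S :=
  hS.mem_of_isTwinPair h.choose_spec

end Twins

section FaultTolerance

def ResolvesTwice (G : SimpleGraph V) (S : Set V) (x y : V) : Prop :=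
  ∃ w₁ ∈ S, ∃ w₂ ∈ S, w₁ ≠ w₂ ∧ G.dist x w₁ ≠ G.dist y w₁ ∧ G.dist x w₂ ≠ G.dist y w₂

variable {G : SimpleGraph V} {S T : Set V}

lemma ResolvesTwice.symm {x y : V} (h : ResolvesTwice G S x y) : ResolvesTwice G S y x := by
  obtain ⟨w₁, h₁, w₂, h₂, hne, d₁, d₂⟩ := h
  exact ⟨w₁, h₁, w₂, h₂, hne, d₁.symm, d₂.symm⟩

lemma ftResSet_of_resolvesTwice (h : ∀ x y, x ≠ y → ResolvesTwice G S x y) : FTResSet G S := by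
  refine ⟨fun x y hxy => ?_, fun v _ x y hxy => ?_⟩
  · obtain ⟨w₁, h₁, -, -, -, d₁, -⟩ := h x y hxy
    exact ⟨w₁, h₁, d₁⟩
  · obtain ⟨w₁, h₁, w₂, h₂, hne, d₁, d₂⟩ := h x y hxy
    by_cases hv : w₁ = v
    · exact ⟨w₂, ⟨h₂, fun hw₂ => hne (hv.trans hw₂.symm)⟩, d₂⟩
    · exact ⟨w₁, ⟨h₁, hv⟩, d₁⟩

lemma ftmd_eq_ncard [Finite V] (hT : FTResSet G T) (hmin : ∀ S, FTResSet G S → T ⊆ S) :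
    ftmd G = T.ncard := by
  refine le_antisymm (Nat.sInf_le ⟨T, rfl, hT⟩) (le_csInf ⟨_, T, rfl, hT⟩ ?_)
  rintro n ⟨S, rfl, hS⟩
  exact Set.ncard_le_ncard (hmin S hS) (Set.toFinite S)

end FaultTolerance

namespace Benes

abbrev Vertex (r : ℕ) := (Fin r → Bool) × Fin (2 * r + 1)

variable {r : ℕ}

/-- The (1-based) bit switched by the edges between levels `j` and `j + 1`. -/
def edgeBit (r j : ℕ) : ℕ := if j < r then j + 1 else 2 * r - j

lemma edgeBit_eq_succ_iff {b j : ℕ} (hb : b < r) :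
    edgeBit r j = b + 1 ↔ j = b ∨ j = 2 * r - 1 - b := by
  unfold edgeBit
  split_ifs <;> omega

def SwitchesOutside (r b x y : ℕ) : Prop :=
  ∀ j, edgeBit r j = b + 1 → j < min x y ∨ max x y < j + 1

lemma switchesOutside_iff {b x y : ℕ} (hb : b < r) :
    SwitchesOutside r b x y ↔
      (b < min x y ∨ max x y < b + 1) ∧ (2 * r - 1 - b < min x y ∨ max x y < 2 * r - b) := by
  refine ⟨fun h => ⟨?_, ?_⟩, fun h j hj => ?_⟩
  · exact h b ((edgeBit_eq_succ_iff hb).mpr (Or.inl rfl))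
  · have := h (2 * r - 1 - b) ((edgeBit_eq_succ_iff hb).mpr (Or.inr rfl))
    omega
  · rcases (edgeBit_eq_succ_iff hb).mp hj with rfl | rfl <;> omega

lemma adj_iff {u v : Vertex r} :
    (Benes r).Adj u v ↔ ∃ j, ((u.2.val = j ∧ v.2.val = j + 1) ∨ (v.2.val = j ∧ u.2.val = j + 1)) ∧
      ∀ i : Fin r, i.val + 1 ≠ edgeBit r j → u.1 i = v.1 i := by
  refine exists_congr fun j => and_congr_right fun _ => ⟨?_, fun h => ?_⟩
  · rintro (h | ⟨k, hk, -, hall⟩) i hi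
    · exact congrFun h i
    · exact hall i fun hik => hi (hik ▸ hk)
  · by_cases heq : u.1 = v.1
    · exact Or.inl heq
    obtain ⟨k, hk⟩ := Function.ne_iff.mp heq
    have hkj : k.val + 1 = edgeBit r j := by_contra fun h' => hk (h k h')
    exact Or.inr ⟨k, hkj, hk, fun i hik => h i fun hi => hik (Fin.ext (by omega))⟩

lemma adj_of_level_succ {s t : Fin r → Bool} {a c : Fin (2 * r + 1)} (hac : a.val + 1 = c.val)
    (hst : ∀ i : Fin r, i.val + 1 ≠ edgeBit r a.val → s i = t i) :
    (Benes r).Adj (s, a) (t, c) :=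
  adj_iff.mpr ⟨a.val, Or.inl ⟨rfl, hac.symm⟩, hst⟩

lemma level_succ_of_adj {u v : Vertex r} (h : (Benes r).Adj u v) :
    u.2.val + 1 = v.2.val ∨ v.2.val + 1 = u.2.val := by
  obtain ⟨j, hj, -⟩ := h
  omega

lemma exists_column_walk (s : Fin r → Bool) {a c : Fin (2 * r + 1)} (hca : c ≤ a) :
    ∃ p : (Benes r).Walk (s, a) (s, c), p.length = a.val - c.val := by
  obtain ⟨d, hd⟩ : ∃ d, a.val = c.val + d := ⟨a.val - c.val, by omega⟩
  induction d generalizing a with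
  | zero =>
    obtain rfl : a = c := Fin.ext (by omega)
    exact ⟨.nil, by simp⟩
  | succ d ih =>
    let b : Fin (2 * r + 1) := ⟨c.val + d, by omega⟩
    obtain ⟨p, hp⟩ := ih (a := b) (Fin.mk_le_mk.mpr (by omega)) rfl
    have hadj : (Benes r).Adj (s, a) (s, b) :=
      (adj_of_level_succ (by simp [b]; omega) fun _ _ => rfl).symm
    exact ⟨.cons hadj p, by simp only [Walk.length_cons, hp, b]; omega⟩

lemma reachable_bottom_mid (s t : Fin r → Bool) :
    (Benes r).Reachable (s, ⟨0, by omega⟩) (t, ⟨r, by omega⟩) := by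
  let mix (j : ℕ) : Fin r → Bool := fun i => if i.val < j then t i else s i
  have climb (j : ℕ) (hj : j ≤ r) :
      (Benes r).Reachable (s, ⟨0, by omega⟩) (mix j, ⟨j, by omega⟩) := by
    induction j with
    | zero => simp [mix]
    | succ j ih =>
      refine (ih (by omega)).trans (adj_of_level_succ rfl fun i hi => ?_).reachable
      have hbit : edgeBit r j = j + 1 := if_pos (by omega)
      have hij : i.val ≠ j := fun h => hi (by rw [h]; exact hbit.symm)
      simp only [mix]
      split_ifs <;> first | rfl | omega
  simpa [mix] using climb r le_rfl

lemma connected : (Benes r).Connected := by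
  have hcol : ∀ (s : Fin r → Bool) (a c : Fin (2 * r + 1)), (Benes r).Reachable (s, a) (s, c) := by
    intro s a c
    rcases le_total c a with h | h
    · exact (exists_column_walk s h).choose.reachable
    · exact (exists_column_walk s h).choose.reachable.symm
  refine (connected_iff _).mpr ⟨fun ⟨s, a⟩ ⟨t, c⟩ => ?_, inferInstance⟩
  exact ((hcol s a _).trans (reachable_bottom_mid s t)).trans (hcol t _ c)

lemma level_le_add_length {u v : Vertex r} (p : (Benes r).Walk u v) :
    u.2.val ≤ v.2.val + p.length := by
  induction p with
  | nil => simp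
  | cons h p ih =>
    have := level_succ_of_adj h
    rw [Walk.length_cons]
    omega

lemma max_level_lt_length_add_min {u v z : Vertex r} (p : (Benes r).Walk u v)
    (hz : z ∈ p.support) (hout : z.2.val < min u.2.val v.2.val ∨ max u.2.val v.2.val < z.2.val) :
    max u.2.val v.2.val < p.length + min u.2.val v.2.val := by
  obtain ⟨q, q', rfl⟩ := Walk.mem_support_iff_exists_append.mp hz
  have := level_le_add_length q
  have := level_le_add_length q.reverse
  have := level_le_add_length q'
  have := level_le_add_length q'.reverse
  rw [Walk.length_reverse] at *
  rw [Walk.length_append]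
  omega

lemma max_level_le_dist_add_min (u v : Vertex r) :
    max u.2.val v.2.val ≤ (Benes r).dist u v + min u.2.val v.2.val := by
  obtain ⟨p, hp⟩ := connected.exists_walk_length_eq_dist u v
  have := level_le_add_length p
  have := level_le_add_length p.reverse
  rw [Walk.length_reverse] at *
  omega

lemma dist_column_add_min (s : Fin r → Bool) (a c : Fin (2 * r + 1)) :
    (Benes r).dist (s, a) (s, c) + min a.val c.val = max a.val c.val := by
  have hge := max_level_le_dist_add_min (s, a) (s, c)
  rcases le_total c a with h | h
  · have := dist_le (exists_column_walk s h).choose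
    rw [(exists_column_walk s h).choose_spec] at this
    dsimp only at hge
    omega
  · have := dist_le (exists_column_walk s h).choose
    rw [(exists_column_walk s h).choose_spec, dist_comm] at this
    dsimp only at hge
    omega

lemma exists_crossing {u v : Vertex r} (p : (Benes r).Walk u v) {b : Fin r}
    (hb : u.1 b ≠ v.1 b) : ∃ j, edgeBit r j = b.val + 1 ∧
      (∃ z ∈ p.support, z.2.val = j) ∧ ∃ z ∈ p.support, z.2.val = j + 1 := by
  induction p with
  | nil => exact absurd rfl hb
  | @cons x y w h q ih =>
    by_cases hxy : x.1 b = y.1 b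
    · obtain ⟨j, hj, ⟨z, hz, hzj⟩, z', hz', hz'j⟩ := ih (hxy ▸ hb)
      exact ⟨j, hj, ⟨z, by simp [hz], hzj⟩, z', by simp [hz'], hz'j⟩
    obtain ⟨j, hlev, hbit⟩ := adj_iff.mp h
    refine ⟨j, by_contra fun h' => hxy (hbit b (Ne.symm h')), ?_⟩
    have hx : x ∈ (Walk.cons h q).support := Walk.start_mem_support _
    have hy : y ∈ (Walk.cons h q).support := by simp
    rcases hlev with ⟨h₁, h₂⟩ | ⟨h₁, h₂⟩
    · exact ⟨⟨x, hx, h₁⟩, y, hy, h₂⟩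
    · exact ⟨⟨y, hy, h₁⟩, x, hx, h₂⟩

lemma max_level_lt_dist_add_min {u v : Vertex r} {b : Fin r} (hb : u.1 b ≠ v.1 b)
    (hout : SwitchesOutside r b u.2.val v.2.val) :
    max u.2.val v.2.val < (Benes r).dist u v + min u.2.val v.2.val := by
  obtain ⟨p, hp⟩ := connected.exists_walk_length_eq_dist u v
  obtain ⟨j, hj, ⟨z, hz, hzj⟩, z', hz', hz'j⟩ := exists_crossing p hb
  rw [← hp]
  rcases hout j hj with h | h
  · exact max_level_lt_length_add_min p hz (by omega)
  · exact max_level_lt_length_add_min p hz' (by omega)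

lemma dist_column_ne {s t : Fin r → Bool} {a c : Fin (2 * r + 1)} {b : Fin r} (hb : s b ≠ t b)
    (hout : SwitchesOutside r b a.val c.val) :
    (Benes r).dist (s, a) (s, c) ≠ (Benes r).dist (t, a) (s, c) := by
  have hcol := dist_column_add_min s a c
  have hlt := max_level_lt_dist_add_min (u := (t, a)) (v := (s, c)) hb.symm hout
  dsimp only at hlt
  omega

def twinLevels (r : ℕ) : Set (Fin (2 * r + 1)) := {a | a.val = 0 ∨ a.val = r ∨ a.val = 2 * r}

def twinLevelSet (r : ℕ) : Set (Vertex r) := Set.univ ×ˢ twinLevels r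

lemma exists_edgeBit_eq_of_mem_twinLevels (hr : 0 < r) {a : Fin (2 * r + 1)}
    (ha : a ∈ twinLevels r) :
    ∃ k : Fin r, ∀ j, (a.val = j ∨ a.val = j + 1) → j < 2 * r → edgeBit r j = k.val + 1 := by
  rcases ha with ha | ha | ha
  · exact ⟨⟨0, hr⟩, fun j hj _ => (edgeBit_eq_succ_iff hr).mpr (by omega)⟩
  · exact ⟨⟨r - 1, by omega⟩, fun j hj _ =>
      (edgeBit_eq_succ_iff (b := r - 1) (by omega)).mpr (by omega)⟩
  · exact ⟨⟨0, hr⟩, fun j hj hj2 => (edgeBit_eq_succ_iff hr).mpr (by omega)⟩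

lemma neighborSet_eq_of_eq_off {s s' : Fin r → Bool} {a : Fin (2 * r + 1)} {k : Fin r}
    (hk : ∀ j, (a.val = j ∨ a.val = j + 1) → j < 2 * r → edgeBit r j = k.val + 1)
    (hs : ∀ i, i ≠ k → s i = s' i) :
    (Benes r).neighborSet (s, a) = (Benes r).neighborSet (s', a) := by
  ext z
  simp only [mem_neighborSet, adj_iff]
  refine exists_congr fun j => and_congr_right fun hlev => forall_congr' fun i =>
    imp_congr_right fun hi => ?_
  have hj : edgeBit r j = k.val + 1 := hk j (by omega) (by have := z.2.isLt; omega)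
  rw [hs i fun hik => hi (by rw [hik, hj])]

lemma isTwin_of_mem_twinLevelSet (hr : 0 < r) {u : Vertex r} (hu : u ∈ twinLevelSet r) :
    IsTwin (Benes r) u := by
  obtain ⟨s, a⟩ := u
  obtain ⟨k, hk⟩ := exists_edgeBit_eq_of_mem_twinLevels hr hu.2
  refine ⟨(Function.update s k (!s k), a), fun h => ?_, Or.inl
    (neighborSet_eq_of_eq_off hk fun i hi => (Function.update_of_ne hi _ _).symm)⟩
  simpa using congrFun (congrArg Prod.fst h) k

lemma ncard_twinLevelSet (hr : 0 < r) : (twinLevelSet r).ncard = 3 * 2 ^ r := by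
  have hlevels : (twinLevels r).ncard = 3 := by
    refine Set.ncard_eq_three.mpr ⟨⟨0, by omega⟩, ⟨r, by omega⟩, ⟨2 * r, by omega⟩,
      by simp [Fin.ext_iff]; omega, by simp [Fin.ext_iff]; omega, by simp [Fin.ext_iff]; omega, ?_⟩
    ext a
    simp only [twinLevels, Set.mem_ofPred_eq, Set.mem_insert_iff, Set.mem_singleton_iff,
      Fin.ext_iff]
  rw [twinLevelSet, Set.ncard_prod, Set.ncard_univ, hlevels, Nat.card_eq_fintype_card,
    Fintype.card_fun, Fintype.card_bool, Fintype.card_fin, mul_comm]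

lemma exists_twinLevel_switchesOutside (a : Fin (2 * r + 1)) (b : Fin r) :
    ∃ c ∈ twinLevels r, SwitchesOutside r b a.val c.val := by
  have hb := b.isLt
  have ha := a.isLt
  by_cases hab : a.val ≤ b.val
  · exact ⟨⟨0, by omega⟩, Or.inl rfl, (switchesOutside_iff (y := 0) hb).mpr (by omega)⟩
  by_cases hab' : 2 * r - a.val ≤ b.val
  · exact ⟨⟨2 * r, by omega⟩, Or.inr (Or.inr rfl),
      (switchesOutside_iff (y := 2 * r) hb).mpr (by omega)⟩
  · exact ⟨⟨r, by omega⟩, Or.inr (Or.inl rfl), (switchesOutside_iff (y := r) hb).mpr (by omega)⟩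

lemma resolvesTwice_of_level_lt (hr : 0 < r) {s t : Fin r → Bool} {a c : Fin (2 * r + 1)}
    (hac : a < c) : ResolvesTwice (Benes r) (twinLevelSet r) (s, a) (t, c) := by
  have hac : a.val < c.val := hac
  have hcr := c.isLt
  refine ⟨(s, ⟨0, by omega⟩), ⟨trivial, Or.inl rfl⟩, (t, ⟨2 * r, by omega⟩),
    ⟨trivial, Or.inr (Or.inr rfl)⟩, fun h => by simp [Fin.ext_iff] at h; omega, ?_, ?_⟩
  · have h₁ := dist_column_add_min s a ⟨0, by omega⟩
    have h₂ := max_level_le_dist_add_min (t, c) (s, ⟨0, by omega⟩)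
    dsimp only at h₁ h₂
    omega
  · have h₁ := dist_column_add_min t c ⟨2 * r, by omega⟩
    have h₂ := max_level_le_dist_add_min (s, a) (t, ⟨2 * r, by omega⟩)
    dsimp only at h₁ h₂
    omega

lemma resolvesTwice_of_ne {s t : Fin r → Bool} (hst : s ≠ t) (a : Fin (2 * r + 1)) :
    ResolvesTwice (Benes r) (twinLevelSet r) (s, a) (t, a) := by
  obtain ⟨b, hb⟩ := Function.ne_iff.mp hst
  obtain ⟨c, hc, hout⟩ := exists_twinLevel_switchesOutside a b
  exact ⟨(s, c), ⟨trivial, hc⟩, (t, c), ⟨trivial, hc⟩, fun h => hst (congrArg Prod.fst h),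
    dist_column_ne hb hout, (dist_column_ne hb.symm hout).symm⟩

lemma ftResSet_twinLevelSet (hr : 0 < r) : FTResSet (Benes r) (twinLevelSet r) := by
  refine ftResSet_of_resolvesTwice fun ⟨s, a⟩ ⟨t, c⟩ hxy => ?_
  rcases lt_trichotomy a c with h | rfl | h
  · exact resolvesTwice_of_level_lt hr h
  · exact resolvesTwice_of_ne (fun hst => hxy (by rw [hst])) a
  · exact (resolvesTwice_of_level_lt hr h).symm

end Benes

theorem benes_ftmd (r : ℕ) (hr : 3 ≤ r) : ftmd (Benes r) = 3 * 2 ^ r := by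
  have hr₀ : 0 < r := by omega
  rw [ftmd_eq_ncard (Benes.ftResSet_twinLevelSet hr₀)
      fun _ hS _ hu => hS.mem_of_isTwin (Benes.isTwin_of_mem_twinLevelSet hr₀ hu),
    Benes.ncard_twinLevelSet hr₀]
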